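/- arXiv:2304.03849 — 4 statements merged into one kernel-verified Lean document; each statement's English description precedes it below -/
import Mathlib

section
/- Let E = EuclideanSpace ℝ (Fin n). Let r₁, r₂ : (ℝ → E) → ℝ, let L₁, L₂ ≥ 0, let 0 ≤ a₁ ≤ b₁, 0 ≤ a₂ ≤ b₂, and 0 ≤ a ≤ b be real numbers. For a signal s : ℝ → E and τ ∈ ℝ, write shift_τ s for the signal t ↦ s(τ + t). Assume: (i) for i = 1, 2 and all signals s, z and all M ≥ 0, if ‖s(t) − z(t)‖ ≤ M for all t ∈ [aᵢ, bᵢ] then |rᵢ(s) − rᵢ(z)| ≤ Lᵢ·M; and (ii) for every signal s, the maps τ ↦ r₁(shift_τ s) and τ ↦ r₂(shift_τ s) are continuous. Define ρ₃(s) = max_{t' ∈ [a,b]} min( r₂(shift_{t'} s), min_{t'' ∈ [0,t']} r₁(shift_{t''} s) ). Then for all signals s, z and all M ≥ 0, if ‖s(t) − z(t)‖ ≤ M for all t ∈ [min(a₁, a₂ + a), b + max(b₁, b₂)], then |ρ₃(s) − ρ₃(z)| ≤ max(L₁, L₂)·M. -/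
/-!
Taking `min`, `⨅` or `⨆` of two families of reals that are uniformly within `C` of each other
gives results within `C` of each other; in Mathlib's conventions this holds even for unbounded
families over a nonempty index, as both then take the junk value `0`. The windows `[τ + aᵢ, τ + bᵢ]`
read by the shifted measures, for `τ ∈ [0, b]` resp. `τ ∈ [a, b]`, all lie in
`[min a₁ (a₂ + a), b + max b₁ b₂]`, so each inner term moves by at most `max L₁ L₂ * M`.
-/

open Set

namespace Real

variable {ι : Sort*}

theorem abs_iSup_sub_iSup_le [Nonempty ι] {f g : ι → ℝ} {C : ℝ} (h : ∀ i, |f i - g i| ≤ C) :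
    |(⨆ i, f i) - ⨆ i, g i| ≤ C := by
  have bddAbove_of_close {u v : ι → ℝ} (huv : ∀ i, |u i - v i| ≤ C)
      (hv : BddAbove (range v)) : BddAbove (range u) := by
    obtain ⟨B, hB⟩ := hv
    exact ⟨B + C, forall_mem_range.2 fun i => by
      linarith [(abs_sub_le_iff.1 (huv i)).1, hB (mem_range_self i)]⟩
  have h' : ∀ i, |g i - f i| ≤ C := fun i => abs_sub_comm (g i) (f i) ▸ h i
  by_cases hf : BddAbove (range f)
  · have hg := bddAbove_of_close h' hf
    rw [abs_sub_le_iff, sub_le_iff_le_add, sub_le_iff_le_add]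
    exact ⟨ciSup_le fun i => by linarith [(abs_sub_le_iff.1 (h i)).1, le_ciSup hg i],
      ciSup_le fun i => by linarith [(abs_sub_le_iff.1 (h i)).2, le_ciSup hf i]⟩
  · have hg : ¬BddAbove (range g) := mt (bddAbove_of_close h) hf
    rw [iSup_of_not_bddAbove hf, iSup_of_not_bddAbove hg, sub_zero, abs_zero]
    exact (abs_nonneg _).trans (h (Classical.arbitrary ι))

theorem iInf_eq_neg_iSup_neg (f : ι → ℝ) : ⨅ i, f i = -⨆ i, -f i := by
  rw [iInf, iSup, sInf_def, neg_range]

theorem abs_iInf_sub_iInf_le [Nonempty ι] {f g : ι → ℝ} {C : ℝ} (h : ∀ i, |f i - g i| ≤ C) :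
    |(⨅ i, f i) - ⨅ i, g i| ≤ C := by
  rw [iInf_eq_neg_iSup_neg f, iInf_eq_neg_iSup_neg g, neg_sub_neg, abs_sub_comm]
  exact abs_iSup_sub_iSup_le fun i => by rw [neg_sub_neg, abs_sub_comm]; exact h i

end Real

theorem abs_sub_shift_le_of_lipschitz_window {E : Type*} [SeminormedAddGroup E]
    {r : (ℝ → E) → ℝ} {L c d : ℝ}
    (hr : ∀ (s z : ℝ → E) (M : ℝ), 0 ≤ M →
      (∀ t ∈ Icc c d, ‖s t - z t‖ ≤ M) → |r s - r z| ≤ L * M)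
    {s z : ℝ → E} {M τ : ℝ} (hM : 0 ≤ M) (hsz : ∀ t ∈ Icc (τ + c) (τ + d), ‖s t - z t‖ ≤ M) :
    |r (fun t => s (τ + t)) - r (fun t => z (τ + t))| ≤ L * M :=
  hr _ _ M hM fun t ht => hsz _ ⟨by linarith [ht.1], by linarith [ht.2]⟩

theorem stmt_5_general (n : ℕ)
    (r₁ r₂ : (ℝ → EuclideanSpace ℝ (Fin n)) → ℝ)
    (L₁ L₂ a₁ b₁ a₂ b₂ a b : ℝ)
    (ha : 0 ≤ a) (hab : a ≤ b)
    (hr₁ : ∀ (s z : ℝ → EuclideanSpace ℝ (Fin n)) (M : ℝ), 0 ≤ M →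
      (∀ t ∈ Set.Icc a₁ b₁, ‖s t - z t‖ ≤ M) → |r₁ s - r₁ z| ≤ L₁ * M)
    (hr₂ : ∀ (s z : ℝ → EuclideanSpace ℝ (Fin n)) (M : ℝ), 0 ≤ M →
      (∀ t ∈ Set.Icc a₂ b₂, ‖s t - z t‖ ≤ M) → |r₂ s - r₂ z| ≤ L₂ * M)
    (ρ₃ : (ℝ → EuclideanSpace ℝ (Fin n)) → ℝ)
    (hρ₃ : ∀ s, ρ₃ s = ⨆ t' : Set.Icc a b,
      min (r₂ (fun t => s ((t' : ℝ) + t)))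
        (⨅ t'' : Set.Icc (0:ℝ) (t' : ℝ), r₁ (fun t => s ((t'' : ℝ) + t)))) :
    ∀ (s z : ℝ → EuclideanSpace ℝ (Fin n)) (M : ℝ), 0 ≤ M →
      (∀ t ∈ Set.Icc (min a₁ (a₂ + a)) (b + max b₁ b₂), ‖s t - z t‖ ≤ M) →
      |ρ₃ s - ρ₃ z| ≤ max L₁ L₂ * M := by
  intro s z M hM hsz
  have close₁ : ∀ τ ∈ Icc 0 b,
      |r₁ (fun t => s (τ + t)) - r₁ (fun t => z (τ + t))| ≤ max L₁ L₂ * M := fun τ hτ =>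
    (abs_sub_shift_le_of_lipschitz_window hr₁ hM fun t ht => hsz t
      ⟨by linarith [min_le_left a₁ (a₂ + a), hτ.1, ht.1],
        by linarith [le_max_left b₁ b₂, hτ.2, ht.2]⟩).trans
      (mul_le_mul_of_nonneg_right (le_max_left _ _) hM)
  have close₂ : ∀ τ ∈ Icc a b,
      |r₂ (fun t => s (τ + t)) - r₂ (fun t => z (τ + t))| ≤ max L₁ L₂ * M := fun τ hτ =>
    (abs_sub_shift_le_of_lipschitz_window hr₂ hM fun t ht => hsz t
      ⟨by linarith [min_le_right a₁ (a₂ + a), hτ.1, ht.1],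
        by linarith [le_max_right b₁ b₂, hτ.2, ht.2]⟩).trans
      (mul_le_mul_of_nonneg_right (le_max_right _ _) hM)
  have : Nonempty (Icc a b) := nonempty_Icc_subtype hab
  rw [hρ₃ s, hρ₃ z]
  refine Real.abs_iSup_sub_iSup_le fun t' =>
    (abs_min_sub_min_le_max _ _ _ _).trans (max_le (close₂ t' t'.2) ?_)
  have : Nonempty (Icc 0 (t' : ℝ)) := nonempty_Icc_subtype (ha.trans t'.2.1)
  exact Real.abs_iInf_sub_iInf_le fun t'' => close₁ t'' ⟨t''.2.1, t''.2.2.trans t'.2.2⟩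

theorem stmt_5 (n : ℕ)
    (r₁ r₂ : (ℝ → EuclideanSpace ℝ (Fin n)) → ℝ)
    (L₁ L₂ a₁ b₁ a₂ b₂ a b : ℝ)
    (hL₁ : 0 ≤ L₁) (hL₂ : 0 ≤ L₂)
    (ha₁ : 0 ≤ a₁) (hab₁ : a₁ ≤ b₁) (ha₂ : 0 ≤ a₂) (hab₂ : a₂ ≤ b₂)
    (ha : 0 ≤ a) (hab : a ≤ b)
    (hr₁ : ∀ (s z : ℝ → EuclideanSpace ℝ (Fin n)) (M : ℝ), 0 ≤ M →
      (∀ t ∈ Set.Icc a₁ b₁, ‖s t - z t‖ ≤ M) → |r₁ s - r₁ z| ≤ L₁ * M)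
    (hr₂ : ∀ (s z : ℝ → EuclideanSpace ℝ (Fin n)) (M : ℝ), 0 ≤ M →
      (∀ t ∈ Set.Icc a₂ b₂, ‖s t - z t‖ ≤ M) → |r₂ s - r₂ z| ≤ L₂ * M)
    (hc₁ : ∀ s : ℝ → EuclideanSpace ℝ (Fin n),
      Continuous (fun τ : ℝ => r₁ (fun t => s (τ + t))))
    (hc₂ : ∀ s : ℝ → EuclideanSpace ℝ (Fin n),
      Continuous (fun τ : ℝ => r₂ (fun t => s (τ + t))))
    (ρ₃ : (ℝ → EuclideanSpace ℝ (Fin n)) → ℝ)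
    (hρ₃ : ∀ s, ρ₃ s = ⨆ t' : Set.Icc a b,
      min (r₂ (fun t => s ((t' : ℝ) + t)))
        (⨅ t'' : Set.Icc (0:ℝ) (t' : ℝ), r₁ (fun t => s ((t'' : ℝ) + t)))) :
    ∀ (s z : ℝ → EuclideanSpace ℝ (Fin n)) (M : ℝ), 0 ≤ M →
      (∀ t ∈ Set.Icc (min a₁ (a₂ + a)) (b + max b₁ b₂), ‖s t - z t‖ ≤ M) →
      |ρ₃ s - ρ₃ z| ≤ max L₁ L₂ * M :=
  stmt_5_general n r₁ r₂ L₁ L₂ a₁ b₁ a₂ b₂ a b ha hab hr₁ hr₂ ρ₃ hρ₃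
end

section
/- Fix n and a family of atomic functions h : A → (EuclideanSpace ℝ (Fin n) → ℝ) such that each h(μ) is 1-Lipschitz and bounded (there is B_μ with |h(μ)(x)| ≤ B_μ for all x). Define STL formulas over A inductively: ψ ::= atom μ | ¬ψ | ψ₁ ∧ ψ₂ | ψ₁ ∨ ψ₂ | ψ₁ U_{[a,b]} ψ₂, where in each until operator 0 ≤ a ≤ b are real numbers. Define the robustness ρ_ψ : (ℝ → EuclideanSpace ℝ (Fin n)) → ℝ → ℝ recursively by: ρ_{atom μ}(s, t) = h(μ)(s(t)); ρ_{¬ψ}(s, t) = −ρ_ψ(s, t); ρ_{ψ₁∧ψ₂}(s, t) = min(ρ_{ψ₁}(s, t), ρ_{ψ₂}(s, t)); ρ_{ψ₁∨ψ₂}(s, t) = max(ρ_{ψ₁}(s, t), ρ_{ψ₂}(s, t)); ρ_{ψ₁ U_{[a,b]} ψ₂}(s, t) = sup_{t' ∈ [t+a, t+b]} min( ρ_{ψ₂}(s, t'), inf_{t'' ∈ [t, t']} ρ_{ψ₁}(s, t'') ). Then for every STL formula ψ there exist a constant L ≥ 0 and reals 0 ≤ a_ψ ≤ b_ψ such that for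 all signals s, z : ℝ → EuclideanSpace ℝ (Fin n) and all M ≥ 0: if ‖s(τ) − z(τ)‖ ≤ M for all τ ∈ [a_ψ, b_ψ], then |ρ_ψ(s, 0) − ρ_ψ(z, 0)| ≤ L·M. -/
/-!
The Lipschitz constant can always be taken to be `1`: the atoms are `1`-Lipschitz, and negation,
`min`, `max`, suprema and infima all move by at most `M` when their arguments do. The value of
`ψ.rob h s t` only depends on `s` on `[t, t + ψ.horizon]`, since each until operator looks ahead
by at most its upper time bound.
-/

/-- STL formulas over a type `A` of atomic propositions.  Each `until`
operator carries real time bounds `a b` with `0 ≤ a ≤ b`. -/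
inductive STLFormula (A : Type) : Type where
  | atom : A → STLFormula A
  | not : STLFormula A → STLFormula A
  | and : STLFormula A → STLFormula A → STLFormula A
  | or : STLFormula A → STLFormula A → STLFormula A
  | untl : (a b : ℝ) → 0 ≤ a → a ≤ b → STLFormula A → STLFormula A → STLFormula A

/-- The robustness measure of an STL formula, given robustness functions
`h μ` for the atomic propositions. -/
noncomputable def STLFormula.rob {A : Type} {n : ℕ}
    (h : A → EuclideanSpace ℝ (Fin n) → ℝ) :
    STLFormula A → (ℝ → EuclideanSpace ℝ (Fin n)) → ℝ → ℝ
  | .atom μ, s, t => h μ (s t)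
  | .not ψ, s, t => -(ψ.rob h s t)
  | .and ψ₁ ψ₂, s, t => min (ψ₁.rob h s t) (ψ₂.rob h s t)
  | .or ψ₁ ψ₂, s, t => max (ψ₁.rob h s t) (ψ₂.rob h s t)
  | .untl a b _ _ ψ₁ ψ₂, s, t =>
      ⨆ t' : Set.Icc (t + a) (t + b),
        min (ψ₂.rob h s t') (⨅ t'' : Set.Icc t (t' : ℝ), ψ₁.rob h s t'')

open Set

namespace Real

variable {ι : Sort*}

variable {f g : ι → ℝ} {M : ℝ}

theorem bddAbove_range_of_le_add (hf : BddAbove (range f)) (hgf : ∀ i, g i ≤ f i + M) :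
    BddAbove (range g) := by
  obtain ⟨c, hc⟩ := hf
  exact ⟨c + M, forall_mem_range.2 fun i => (hgf i).trans (by gcongr; exact hc ⟨i, rfl⟩)⟩

variable [Nonempty ι]

theorem iSup_le_iSup_add (hg : BddAbove (range g)) (hfg : ∀ i, f i ≤ g i + M) :
    ⨆ i, f i ≤ (⨆ i, g i) + M :=
  ciSup_le fun i => (hfg i).trans (by gcongr; exact le_ciSup hg i)

/-- Without boundedness both suprema take the junk value `0`. -/
theorem abs_iSup_sub_iSup_le_s6 (hfg : ∀ i, |f i - g i| ≤ M) :
    |(⨆ i, f i) - ⨆ i, g i| ≤ M := by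
  have hf_le i : f i ≤ g i + M := by linarith [(abs_le.1 (hfg i)).2]
  have hg_le i : g i ≤ f i + M := by linarith [(abs_le.1 (hfg i)).1]
  by_cases hf : BddAbove (range f)
  · have hg := bddAbove_range_of_le_add hf hg_le
    rw [abs_sub_le_iff]
    constructor
    · linarith [iSup_le_iSup_add hg hf_le]
    · linarith [iSup_le_iSup_add hf hg_le]
  · have hg : ¬BddAbove (range g) := fun hg => hf (bddAbove_range_of_le_add hg hf_le)
    rw [iSup_of_not_bddAbove hf, iSup_of_not_bddAbove hg, sub_zero, abs_zero]
    exact (abs_nonneg _).trans (hfg (Classical.arbitrary ι))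

theorem abs_iInf_sub_iInf_le_s6 (hfg : ∀ i, |f i - g i| ≤ M) :
    |(⨅ i, f i) - ⨅ i, g i| ≤ M := by
  rw [iInf_eq_neg_iSup_neg f, iInf_eq_neg_iSup_neg g, neg_sub_neg, abs_sub_comm]
  exact abs_iSup_sub_iSup_le_s6 fun i => by rw [neg_sub_neg, abs_sub_comm]; exact hfg i

end Real

namespace STLFormula

variable {A : Type}

def horizon : STLFormula A → ℝ
  | .atom _ => 0
  | .not ψ => ψ.horizon
  | .and ψ₁ ψ₂ => max ψ₁.horizon ψ₂.horizon
  | .or ψ₁ ψ₂ => max ψ₁.horizon ψ₂.horizon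
  | .untl _ b _ _ ψ₁ ψ₂ => b + max ψ₁.horizon ψ₂.horizon

theorem horizon_nonneg : ∀ ψ : STLFormula A, 0 ≤ ψ.horizon
  | .atom _ => le_rfl
  | .not ψ => ψ.horizon_nonneg
  | .and ψ₁ _ => ψ₁.horizon_nonneg.trans (le_max_left _ _)
  | .or ψ₁ _ => ψ₁.horizon_nonneg.trans (le_max_left _ _)
  | .untl _ _ ha hab ψ₁ _ =>
    add_nonneg (ha.trans hab) (ψ₁.horizon_nonneg.trans (le_max_left _ _))

theorem abs_rob_sub_rob_le {n : ℕ} {h : A → EuclideanSpace ℝ (Fin n) → ℝ}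
    (hlip : ∀ μ, LipschitzWith 1 (h μ)) (ψ : STLFormula A)
    {s z : ℝ → EuclideanSpace ℝ (Fin n)} {M t : ℝ}
    (hsz : ∀ τ ∈ Icc t (t + ψ.horizon), ‖s τ - z τ‖ ≤ M) :
    |ψ.rob h s t - ψ.rob h z t| ≤ M := by
  induction ψ generalizing t with
  | atom μ =>
    have hdist := (hlip μ).dist_le_mul (s t) (z t)
    rw [NNReal.coe_one, one_mul, Real.dist_eq, dist_eq_norm] at hdist
    exact hdist.trans (hsz t (by simp [horizon]))
  | not ψ ih =>
    rw [rob, rob, neg_sub_neg, abs_sub_comm]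
    exact ih hsz
  | and ψ₁ ψ₂ ih₁ ih₂ =>
    refine (abs_min_sub_min_le_max _ _ _ _).trans (max_le ?_ ?_)
    · exact ih₁ fun τ hτ => hsz τ (Icc_subset_Icc_right (by simp [horizon]) hτ)
    · exact ih₂ fun τ hτ => hsz τ (Icc_subset_Icc_right (by simp [horizon]) hτ)
  | or ψ₁ ψ₂ ih₁ ih₂ =>
    refine (abs_max_sub_max_le_max _ _ _ _).trans (max_le ?_ ?_)
    · exact ih₁ fun τ hτ => hsz τ (Icc_subset_Icc_right (by simp [horizon]) hτ)
    · exact ih₂ fun τ hτ => hsz τ (Icc_subset_Icc_right (by simp [horizon]) hτ)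
  | untl a b ha hab ψ₁ ψ₂ ih₁ ih₂ =>
    have := nonempty_Icc_subtype (show t + a ≤ t + b by linarith)
    refine Real.abs_iSup_sub_iSup_le_s6 fun t' => ?_
    obtain ⟨hat', ht'b⟩ := t'.2
    have := nonempty_Icc_subtype (show t ≤ (t' : ℝ) by linarith)
    refine (abs_min_sub_min_le_max _ _ _ _).trans (max_le ?_ ?_)
    · refine ih₂ fun τ hτ => hsz τ (Icc_subset_Icc ?_ ?_ hτ)
      · linarith
      · simp only [horizon]
        linarith [le_max_right ψ₁.horizon ψ₂.horizon]
    · refine Real.abs_iInf_sub_iInf_le_s6 fun t'' =>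
        ih₁ fun τ hτ => hsz τ (Icc_subset_Icc ?_ ?_ hτ)
      · exact t''.2.1
      · simp only [horizon]
        linarith [t''.2.2, le_max_left ψ₁.horizon ψ₂.horizon]

end STLFormula

theorem stmt_6_general {A : Type} {n : ℕ}
    (h : A → EuclideanSpace ℝ (Fin n) → ℝ)
    (hlip : ∀ μ, LipschitzWith 1 (h μ)) :
    ∀ ψ : STLFormula A, ∃ L : ℝ, 0 ≤ L ∧ ∃ a b : ℝ, 0 ≤ a ∧ a ≤ b ∧
      ∀ (s z : ℝ → EuclideanSpace ℝ (Fin n)) (M : ℝ), 0 ≤ M →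
        (∀ τ ∈ Set.Icc a b, ‖s τ - z τ‖ ≤ M) →
        |ψ.rob h s 0 - ψ.rob h z 0| ≤ L * M := by
  intro ψ
  refine ⟨1, zero_le_one, 0, ψ.horizon, le_rfl, ψ.horizon_nonneg, fun s z M _ hsz => ?_⟩
  rw [one_mul]
  exact ψ.abs_rob_sub_rob_le hlip fun τ hτ => hsz τ (by simpa using hτ)

theorem stmt_6 {A : Type} {n : ℕ}
    (h : A → EuclideanSpace ℝ (Fin n) → ℝ)
    (hlip : ∀ μ, LipschitzWith 1 (h μ))
    (hbdd : ∀ μ, ∃ B : ℝ, ∀ x, |h μ x| ≤ B) :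
    ∀ ψ : STLFormula A, ∃ L : ℝ, 0 ≤ L ∧ ∃ a b : ℝ, 0 ≤ a ∧ a ≤ b ∧
      ∀ (s z : ℝ → EuclideanSpace ℝ (Fin n)) (M : ℝ), 0 ≤ M →
        (∀ τ ∈ Set.Icc a b, ‖s τ - z τ‖ ≤ M) →
        |ψ.rob h s 0 - ψ.rob h z 0| ≤ L * M :=
  stmt_6_general h hlip
end

section
/- Let n, m be positive natural numbers, f : (Fin n → ℝ) → (Fin n → ℝ) an arbitrary function, and g : (Fin n → ℝ) → Matrix (Fin n) (Fin m) ℝ such that g(x)·g(x)ᵀ is positive definite for every x. Let s : ℝ → (Fin n → ℝ) be differentiable, let ρ ≥ 0 and L be real numbers, and let α : ℝ → ℝ be monotone increasing with α(0) = 0. Define h(x, t) = ρ² − L²·‖x − s(t)‖², where ‖·‖ is the Euclidean norm. Then for every x ∈ (Fin n → ℝ) and every t ∈ ℝ, there exists u ∈ (Fin m → ℝ) such that (−2L²)·( (x − s(t)) ⬝ᵥ (f(x) + g(x) *ᵥ u) ) + 2L²·( (x − s(t)) ⬝ᵥ deriv s(t) ) ≥ −α(h(x, t)). -/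
open Matrix

/-- The Euclidean norm on `Fin n → ℝ`, `‖v‖ = √(v ⬝ᵥ v)`. -/
noncomputable def euclNorm {n : ℕ} (v : Fin n → ℝ) : ℝ := Real.sqrt (v ⬝ᵥ v)

/-!
If `L = 0` or `x = s t`, the left-hand side vanishes and `h x t = ρ²`, so the inequality reads
`0 ≥ -α ρ²`, which holds as `α ρ² ≥ α 0 = 0`. Otherwise the left-hand side is an affine function
of `u` whose linear part `u ↦ -2L² (x - s t)ᵀ g(x) u` is nonzero, because `g(x) g(x)ᵀ` is positive
definite; so it takes every real value, in particular `-α (h x t)`.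
-/

namespace Matrix

theorem exists_dotProduct_eq {K ι : Type*} [Field K] [Fintype ι] [DecidableEq ι]
    {w : ι → K} (hw : w ≠ 0) (r : K) : ∃ u : ι → K, w ⬝ᵥ u = r := by
  obtain ⟨i, hi⟩ := Function.ne_iff.mp hw
  exact ⟨Pi.single i (r / w i), by rw [dotProduct_single, mul_div_cancel₀ r hi]⟩

theorem vecMul_ne_zero_of_posDef_mul_transpose {R ι κ : Type*} [CommRing R] [PartialOrder R]
    [StarRing R] [TrivialStar R] [Fintype ι] [Fintype κ] {G : Matrix ι κ R}
    (hG : (G * Gᵀ).PosDef) {v : ι → R} (hv : v ≠ 0) : v ᵥ* G ≠ 0 := by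
  intro hvG
  have hpos := hG.dotProduct_mulVec_pos hv
  rw [star_trivial, dotProduct_mulVec, ← vecMul_vecMul, hvG, zero_vecMul, zero_dotProduct] at hpos
  exact hpos.false

end Matrix

theorem stmt_9_general (n m : ℕ)
    (f : (Fin n → ℝ) → (Fin n → ℝ))
    (g : (Fin n → ℝ) → Matrix (Fin n) (Fin m) ℝ)
    (hg : ∀ x, ((g x) * (g x)ᵀ).PosDef)
    (s : ℝ → (Fin n → ℝ))
    (ρ L : ℝ)
    (α : ℝ → ℝ) (hα : Monotone α) (hα0 : α 0 = 0)
    (h : (Fin n → ℝ) → ℝ → ℝ)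
    (hdef : ∀ x t, h x t = ρ ^ 2 - L ^ 2 * (euclNorm (x - s t)) ^ 2) :
    ∀ (x : Fin n → ℝ) (t : ℝ), ∃ u : Fin m → ℝ,
      (-2 * L ^ 2) * ((x - s t) ⬝ᵥ (f x + (g x) *ᵥ u)) +
        2 * L ^ 2 * ((x - s t) ⬝ᵥ deriv s t) ≥ -α (h x t) := by
  intro x t
  by_cases hdeg : L = 0 ∨ x - s t = 0
  · have hh : h x t = ρ ^ 2 := by
      rcases hdeg with rfl | hv <;> simp [euclNorm, *]
    refine ⟨0, ?_⟩
    have hlhs : (-2 * L ^ 2) * ((x - s t) ⬝ᵥ (f x + g x *ᵥ 0)) +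
        2 * L ^ 2 * ((x - s t) ⬝ᵥ deriv s t) = 0 := by
      rcases hdeg with rfl | hv <;> simp [*]
    rw [hlhs, hh, ge_iff_le, neg_nonpos, ← hα0]
    exact hα (sq_nonneg ρ)
  · push Not at hdeg
    obtain ⟨hL, hv⟩ := hdeg
    have hL2 : 2 * L ^ 2 ≠ 0 := by positivity
    obtain ⟨u, hu⟩ := exists_dotProduct_eq (vecMul_ne_zero_of_posDef_mul_transpose (hg x) hv)
      ((α (h x t) + 2 * L ^ 2 * ((x - s t) ⬝ᵥ deriv s t)) / (2 * L ^ 2) - (x - s t) ⬝ᵥ f x)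
    refine ⟨u, le_of_eq ?_⟩
    rw [dotProduct_add, dotProduct_mulVec, hu]
    field_simp
    ring

theorem stmt_9 (n m : ℕ) (hn : 0 < n) (hm : 0 < m)
    (f : (Fin n → ℝ) → (Fin n → ℝ))
    (g : (Fin n → ℝ) → Matrix (Fin n) (Fin m) ℝ)
    (hg : ∀ x, ((g x) * (g x)ᵀ).PosDef)
    (s : ℝ → (Fin n → ℝ)) (hs : Differentiable ℝ s)
    (ρ L : ℝ) (hρ : 0 ≤ ρ)
    (α : ℝ → ℝ) (hα : Monotone α) (hα0 : α 0 = 0)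
    (h : (Fin n → ℝ) → ℝ → ℝ)
    (hdef : ∀ x t, h x t = ρ ^ 2 - L ^ 2 * (euclNorm (x - s t)) ^ 2) :
    ∀ (x : Fin n → ℝ) (t : ℝ), ∃ u : Fin m → ℝ,
      (-2 * L ^ 2) * ((x - s t) ⬝ᵥ (f x + (g x) *ᵥ u)) +
        2 * L ^ 2 * ((x - s t) ⬝ᵥ deriv s t) ≥ -α (h x t) :=
  stmt_9_general n m f g hg s ρ L α hα hα0 h hdef
end

section
/- Let T > 0, let F : EuclideanSpace ℝ (Fin 2) → ℝ be 1-Lipschitz, and let G : EuclideanSpace ℝ (Fin 2) → ℝ → ℝ be continuous in both arguments jointly with G(·, t) 1-Lipschitz for each t ∈ ℝ. Let Π : EuclideanSpace ℝ (Fin 3) → EuclideanSpace ℝ (Fin 2) denote the projection onto the first two coordinates. For a continuous signal s : ℝ → EuclideanSpace ℝ (Fin 3), define ρ(s) = min( F(Π(s(T))), min_{t ∈ [0, T]} G(Π(s(t)), t) ). Then for all continuous signals s, z : ℝ → EuclideanSpace ℝ (Fin 3) and all M ≥ 0: if ‖Π(s(t)) − Π(z(t))‖ ≤ M for all t ∈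 [0, T], then |ρ(s) − ρ(z)| ≤ M. -/
/-- Projection of `ℝ³` onto its first two coordinates. -/
def projPlane (v : EuclideanSpace ℝ (Fin 3)) : EuclideanSpace ℝ (Fin 2) :=
  WithLp.toLp 2 (fun i => v (Fin.castSucc i))

/-! Both arguments of the `min` defining `ρ` move by at most `M`: the endpoint term because
`F` is 1-Lipschitz, the infimum term because each `G(·, t)` is and infima of pointwise `M`-close
functions are `M`-close; and `|min a b - min c d| ≤ max |a - c| |b - d|`. Joint continuity of `G`
is needed only to make the infima over the compact `[0, T]` bounded below, so that `⨅` is the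
true infimum rather than the junk value `0`. -/

open Set

lemma continuous_projPlane : Continuous projPlane :=
  (PiLp.continuous_toLp 2 _).comp (continuous_pi fun _ => PiLp.continuous_apply 2 _ _)

lemma LipschitzWith.abs_sub_le_of_norm_sub_le {E : Type*} [SeminormedAddCommGroup E]
    {f : E → ℝ} (hf : LipschitzWith 1 f) {x y : E} {r : ℝ} (h : ‖x - y‖ ≤ r) :
    |f x - f y| ≤ r := by
  simpa [Real.dist_eq, dist_eq_norm] using hf.dist_le_mul_of_le (dist_eq_norm x y ▸ h)

lemma ciInf_le_ciInf_add {ι : Type*} [Nonempty ι] {f g : ι → ℝ} {M : ℝ}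
    (hf : BddBelow (range f)) (h : ∀ i, f i ≤ g i + M) : ⨅ i, f i ≤ (⨅ i, g i) + M := by
  have : (⨅ i, f i) - M ≤ ⨅ i, g i :=
    le_ciInf fun i => by linarith [ciInf_le hf i, h i]
  linarith

lemma abs_ciInf_sub_ciInf_le {ι : Type*} [Nonempty ι] {f g : ι → ℝ} {M : ℝ}
    (hf : BddBelow (range f)) (hg : BddBelow (range g)) (h : ∀ i, |f i - g i| ≤ M) :
    |(⨅ i, f i) - ⨅ i, g i| ≤ M := by
  have hfg : ⨅ i, f i ≤ (⨅ i, g i) + M :=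
    ciInf_le_ciInf_add hf fun i => by linarith [(abs_sub_le_iff.mp (h i)).1]
  have hgf : ⨅ i, g i ≤ (⨅ i, f i) + M :=
    ciInf_le_ciInf_add hg fun i => by linarith [(abs_sub_le_iff.mp (h i)).2]
  exact abs_sub_le_iff.mpr ⟨by linarith, by linarith⟩

lemma bddBelow_range_comp_projPlane_Icc {G : EuclideanSpace ℝ (Fin 2) → ℝ → ℝ}
    (hG : Continuous fun q : EuclideanSpace ℝ (Fin 2) × ℝ => G q.1 q.2)
    {s : ℝ → EuclideanSpace ℝ (Fin 3)} (hs : Continuous s) (a b : ℝ) :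
    BddBelow (range fun t : Icc a b => G (projPlane (s t)) t) :=
  (isCompact_range (hG.comp (((continuous_projPlane.comp hs).comp continuous_subtype_val).prodMk
    continuous_subtype_val))).bddBelow

theorem stmt_12 (T : ℝ) (hT : 0 < T)
    (F : EuclideanSpace ℝ (Fin 2) → ℝ) (hF : LipschitzWith 1 F)
    (G : EuclideanSpace ℝ (Fin 2) → ℝ → ℝ)
    (hGcont : Continuous (fun q : EuclideanSpace ℝ (Fin 2) × ℝ => G q.1 q.2))
    (hGlip : ∀ t : ℝ, LipschitzWith 1 (fun x => G x t))
    (ρ : (ℝ → EuclideanSpace ℝ (Fin 3)) → ℝ)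
    (hρ : ∀ s : ℝ → EuclideanSpace ℝ (Fin 3),
      ρ s = min (F (projPlane (s T))) (⨅ t : Set.Icc (0:ℝ) T, G (projPlane (s t)) t)) :
    ∀ (s z : ℝ → EuclideanSpace ℝ (Fin 3)), Continuous s → Continuous z →
      ∀ M : ℝ, 0 ≤ M →
      (∀ t ∈ Set.Icc (0:ℝ) T, ‖projPlane (s t) - projPlane (z t)‖ ≤ M) →
      |ρ s - ρ z| ≤ M := by
  intro s z hs hz M _ hclose
  have hT_mem : T ∈ Icc 0 T := ⟨hT.le, le_rfl⟩
  have : Nonempty (Icc 0 T) := ⟨⟨T, hT_mem⟩⟩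
  rw [hρ s, hρ z]
  refine (abs_min_sub_min_le_max _ _ _ _).trans (max_le ?_ ?_)
  · exact hF.abs_sub_le_of_norm_sub_le (hclose T hT_mem)
  · exact abs_ciInf_sub_ciInf_le (bddBelow_range_comp_projPlane_Icc hGcont hs 0 T)
      (bddBelow_range_comp_projPlane_Icc hGcont hz 0 T)
      fun t => (hGlip t).abs_sub_le_of_norm_sub_le (hclose t t.2)
end
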